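/- arXiv:2205.12726 — 4 statements merged into one kernel-verified Lean document; each statement's English description precedes it below -/
import Mathlib

section
/- Let ρ be a density matrix on ℂ^m ⊗ ℂ^n that is not classical-quantum, let e : Fin m → (Fin m → ℂ) be an orthonormal basis of ℂ^m consisting of eigenvectors of the partial trace tr_B ρ, and let D(ρ) = ∑_i ((e_i e_i*) ⊗ I_n) ρ ((e_i e_i*) ⊗ I_n) be the dephasing of ρ in this basis. Then D(ρ) ≠ ρ and tr_B(D(ρ)) = tr_B ρ. (Thus the quantum-house effect — a local operation on subsystem A that changes the state of AB but not the state of A — can be achieved with any state of nonzero quantum discord.) -/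
open Matrix Kronecker BigOperators ComplexOrder

noncomputable section

/-- Partial trace over the second factor. -/
def trB {m n : ℕ} (ρ : Matrix (Fin m × Fin n) (Fin m × Fin n) ℂ) :
    Matrix (Fin m) (Fin m) ℂ :=
  fun i j => ∑ k : Fin n, ρ (i, k) (j, k)

/-- A density matrix: positive semidefinite with trace 1. -/
def IsDensityMatrix {d : Type*} [Fintype d] [DecidableEq d] (ρ : Matrix d d ℂ) : Prop :=
  ρ.PosSemidef ∧ ρ.trace = 1

/-- An orthonormal basis of ℂ^m, given as a family of m vectors. -/
def IsONB {m : ℕ} (e : Fin m → Fin m → ℂ) : Prop :=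
  ∀ i j, star (e i) ⬝ᵥ e j = if i = j then 1 else 0

/-- The rank-one matrix v v*, with entries v j * conj (v k). -/
def proj {m : ℕ} (v : Fin m → ℂ) : Matrix (Fin m) (Fin m) ℂ :=
  vecMulVec v (star v)

/-- A classical-quantum (zero-discord) state: ρ = ∑ i (eᵢ eᵢ*) ⊗ σᵢ for an
orthonormal basis e of ℂ^m and positive semidefinite σᵢ. -/
def ClassicalQuantum {m n : ℕ} (ρ : Matrix (Fin m × Fin n) (Fin m × Fin n) ℂ) : Prop :=
  ∃ e : Fin m → Fin m → ℂ, IsONB e ∧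
    ∃ σ : Fin m → Matrix (Fin n) (Fin n) ℂ,
      (∀ i, (σ i).PosSemidef) ∧ ρ = ∑ i, proj (e i) ⊗ₖ σ i

/-! Dephasing acts blockwise: `(Pᵢ ⊗ 1) ρ (Pᵢ ⊗ 1) = Pᵢ ⊗ σᵢ`, where `σᵢ = ⟨eᵢ| ρ |eᵢ⟩_A`
(`partialInner`) is positive semidefinite, so a state fixed by it is already classical-quantum.
Taking `tr_B` of `Pᵢ ⊗ σᵢ` gives `(tr σᵢ) Pᵢ = ⟨eᵢ| tr_B ρ |eᵢ⟩ Pᵢ`, and since the `eᵢ`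
diagonalize `tr_B ρ` these sum back to its spectral decomposition. -/

section Dephasing

variable {m n : ℕ}

/-- The map `x ↦ v ⊗ x` from `ℂ^n` to `ℂ^m ⊗ ℂ^n`. -/
def tensorLeft (n : ℕ) (v : Fin m → ℂ) : Matrix (Fin m × Fin n) (Fin n) ℂ :=
  of fun p l => v p.1 * (1 : Matrix (Fin n) (Fin n) ℂ) p.2 l

def partialInner (ρ : Matrix (Fin m × Fin n) (Fin m × Fin n) ℂ) (v : Fin m → ℂ) :
    Matrix (Fin n) (Fin n) ℂ :=
  (tensorLeft n v)ᴴ * ρ * tensorLeft n v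

theorem tensorLeft_mul_mul_conjTranspose (v : Fin m → ℂ) (σ : Matrix (Fin n) (Fin n) ℂ) :
    tensorLeft n v * σ * (tensorLeft n v)ᴴ = proj v ⊗ₖ σ := by
  ext ⟨a, k⟩ ⟨b, l⟩
  simp only [tensorLeft, proj, Matrix.mul_apply, of_apply, conjTranspose_apply, kroneckerMap_apply,
    vecMulVec_apply, Pi.star_apply, RCLike.star_def, one_apply, apply_ite (starRingEnd ℂ), map_zero,
    mul_ite, ite_mul, mul_one, mul_zero, zero_mul, Finset.sum_ite_eq, Finset.mem_univ, if_true]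
  ring

theorem proj_kronecker_one (v : Fin m → ℂ) :
    proj v ⊗ₖ (1 : Matrix (Fin n) (Fin n) ℂ) = tensorLeft n v * (tensorLeft n v)ᴴ := by
  simpa using (tensorLeft_mul_mul_conjTranspose v 1).symm

theorem proj_kronecker_one_mul_mul (ρ : Matrix (Fin m × Fin n) (Fin m × Fin n) ℂ)
    (v : Fin m → ℂ) :
    (proj v ⊗ₖ (1 : Matrix (Fin n) (Fin n) ℂ)) * ρ * (proj v ⊗ₖ 1) =
      proj v ⊗ₖ partialInner ρ v := by
  rw [proj_kronecker_one, ← tensorLeft_mul_mul_conjTranspose, partialInner]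
  simp only [Matrix.mul_assoc]

theorem posSemidef_partialInner {ρ : Matrix (Fin m × Fin n) (Fin m × Fin n) ℂ}
    (hρ : ρ.PosSemidef) (v : Fin m → ℂ) : (partialInner ρ v).PosSemidef :=
  hρ.conjTranspose_mul_mul_same (tensorLeft n v)

theorem trace_partialInner (ρ : Matrix (Fin m × Fin n) (Fin m × Fin n) ℂ) (v : Fin m → ℂ) :
    (partialInner ρ v).trace = star v ⬝ᵥ (trB ρ *ᵥ v) := by
  simp only [partialInner, tensorLeft, trace, trB, diag, Matrix.mul_apply, conjTranspose_apply,
    of_apply, one_apply, dotProduct, mulVec, Fintype.sum_prod_type, Pi.star_apply,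
    apply_ite star, star_zero, mul_ite, ite_mul, mul_one, zero_mul, mul_zero,
    Finset.sum_ite_eq', Finset.mem_univ, if_true, Finset.mul_sum, Finset.sum_mul]
  rw [Finset.sum_comm_cycle]
  refine Finset.sum_congr rfl fun k _ => Finset.sum_comm.trans ?_
  exact Finset.sum_congr rfl fun a _ => Finset.sum_congr rfl fun b _ => by ring

theorem trB_kronecker (A : Matrix (Fin m) (Fin m) ℂ) (σ : Matrix (Fin n) (Fin n) ℂ) :
    trB (A ⊗ₖ σ) = σ.trace • A := by
  ext a b
  simp [trB, trace, Finset.mul_sum, mul_comm]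

theorem trB_sum {ι : Type*} (s : Finset ι) (A : ι → Matrix (Fin m × Fin n) (Fin m × Fin n) ℂ) :
    trB (∑ i ∈ s, A i) = ∑ i ∈ s, trB (A i) := by
  ext a b
  simp only [trB, Matrix.sum_apply]
  exact Finset.sum_comm

theorem sum_proj_eq_one {e : Fin m → Fin m → ℂ} (he : IsONB e) : ∑ i, proj (e i) = 1 := by
  have hUU : (of fun i j => e j i)ᴴ * (of fun i j => e j i) = 1 := by
    ext i j
    simpa [Matrix.mul_apply, dotProduct, one_apply] using he i j
  have hUU' := mul_eq_one_comm.mp hUU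
  ext a b
  simpa [Matrix.mul_apply, proj, vecMulVec_apply, Matrix.sum_apply] using
    congrFun (congrFun hUU' a) b

theorem eq_sum_smul_proj {e : Fin m → Fin m → ℂ} (he : IsONB e)
    {A : Matrix (Fin m) (Fin m) ℂ} {c : Fin m → ℂ} (hc : ∀ i, A *ᵥ e i = c i • e i) :
    A = ∑ i, c i • proj (e i) :=
  calc A = A * ∑ i, proj (e i) := by rw [sum_proj_eq_one he, Matrix.mul_one]
    _ = ∑ i, c i • proj (e i) := by
      simp only [Finset.mul_sum, proj, mul_vecMulVec, hc, smul_vecMulVec]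

theorem trB_sum_proj_kronecker_partialInner {ρ : Matrix (Fin m × Fin n) (Fin m × Fin n) ℂ}
    {e : Fin m → Fin m → ℂ} (he : IsONB e) {c : Fin m → ℂ}
    (hc : ∀ i, trB ρ *ᵥ e i = c i • e i) :
    trB (∑ i, proj (e i) ⊗ₖ partialInner ρ (e i)) = trB ρ := by
  have hci (i : Fin m) : (partialInner ρ (e i)).trace = c i := by
    rw [trace_partialInner, hc, dotProduct_smul, he i i, if_pos rfl, smul_eq_mul, mul_one]
  simp only [trB_sum, trB_kronecker, hci]
  exact (eq_sum_smul_proj he hc).symm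

end Dephasing

theorem stmt0 {m n : ℕ} (ρ : Matrix (Fin m × Fin n) (Fin m × Fin n) ℂ)
    (hρ : IsDensityMatrix ρ) (hcq : ¬ ClassicalQuantum ρ)
    (e : Fin m → Fin m → ℂ) (he : IsONB e)
    (heig : ∀ i, ∃ c : ℂ, (trB ρ) *ᵥ e i = c • e i) :
    (∑ i, (proj (e i) ⊗ₖ (1 : Matrix (Fin n) (Fin n) ℂ)) * ρ *
        (proj (e i) ⊗ₖ (1 : Matrix (Fin n) (Fin n) ℂ))) ≠ ρ ∧
    trB (∑ i, (proj (e i) ⊗ₖ (1 : Matrix (Fin n) (Fin n) ℂ)) * ρ *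
        (proj (e i) ⊗ₖ (1 : Matrix (Fin n) (Fin n) ℂ))) = trB ρ := by
  choose c hc using heig
  have hblocks : (∑ i, (proj (e i) ⊗ₖ (1 : Matrix (Fin n) (Fin n) ℂ)) * ρ *
      (proj (e i) ⊗ₖ (1 : Matrix (Fin n) (Fin n) ℂ))) = ∑ i, proj (e i) ⊗ₖ partialInner ρ (e i) :=
    Finset.sum_congr rfl fun i _ => proj_kronecker_one_mul_mul ρ (e i)
  rw [hblocks]
  refine ⟨fun hfix => hcq ?_, trB_sum_proj_kronecker_partialInner he hc⟩
  exact ⟨e, he, fun i => partialInner ρ (e i), fun i => posSemidef_partialInner hρ.1 (e i),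
    hfix.symm⟩
end
end

section
/- Let K : ι → Matrix (Fin m) (Fin m) ℂ be a finite family of Kraus operators satisfying ∑_k (K_k)ᴴ K_k = I_m, and let ρ be any matrix indexed by (Fin m × Fin n) × (Fin m × Fin n). Then tr_A(∑_k (K_k ⊗ I_n) ρ (K_k ⊗ I_n)ᴴ) = tr_A ρ. (No-signaling: a local quantum operation on subsystem A never changes the reduced state of subsystem B.) -/
open Matrix Kronecker BigOperators ComplexOrder

noncomputable section

/-- Partial trace over the first factor. -/
def trA {m n : ℕ} (ρ : Matrix (Fin m × Fin n) (Fin m × Fin n) ℂ) :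
    Matrix (Fin n) (Fin n) ℂ :=
  fun k l => ∑ i : Fin m, ρ (i, k) (i, l)

/-- A pure state: ρ = ψψ* for a unit vector ψ. -/
def IsPure {d : ℕ} (ρ : Matrix (Fin d) (Fin d) ℂ) : Prop :=
  ∃ ψ : Fin d → ℂ, star ψ ⬝ᵥ ψ = 1 ∧ ρ = vecMulVec ψ (star ψ)

lemma swap4 {M : Type*} [AddCommMonoid M] {α β γ δ : Type*}
    [Fintype α] [Fintype β] [Fintype γ] [Fintype δ] (f : α → β → γ → δ → M) :
    ∑ a, ∑ b, ∑ c, ∑ d, f a b c d = ∑ c, ∑ d, ∑ a, ∑ b, f a b c d := by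
  calc ∑ a, ∑ b, ∑ c, ∑ d, f a b c d
      = ∑ p : α × β, ∑ q : γ × δ, f p.1 p.2 q.1 q.2 := by
        simp [Fintype.sum_prod_type]
    _ = ∑ q : γ × δ, ∑ p : α × β, f p.1 p.2 q.1 q.2 := Finset.sum_comm
    _ = ∑ c, ∑ d, ∑ a, ∑ b, f a b c d := by
        simp [Fintype.sum_prod_type]

theorem stmt6 {ι : Type*} [Fintype ι] {m n : ℕ}
    (K : ι → Matrix (Fin m) (Fin m) ℂ)
    (hK : ∑ k, (K k)ᴴ * K k = 1)
    (ρ : Matrix (Fin m × Fin n) (Fin m × Fin n) ℂ) :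
    trA (∑ k, (K k ⊗ₖ (1 : Matrix (Fin n) (Fin n) ℂ)) * ρ *
        (K k ⊗ₖ (1 : Matrix (Fin n) (Fin n) ℂ))ᴴ) = trA ρ := by
  have hK' : ∀ a c : Fin m, (∑ κ, ∑ i, (starRingEnd ℂ) (K κ i c) * K κ i a)
      = if c = a then 1 else 0 := by
    intro a c
    have := congrFun (congrFun hK c) a
    simpa [Matrix.sum_apply, Matrix.mul_apply, Matrix.conjTranspose_apply,
      Matrix.one_apply] using this
  ext k l
  simp only [trA, Matrix.sum_apply, Matrix.mul_apply, Matrix.conjTranspose_apply,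
    Matrix.kroneckerMap_apply, Fintype.sum_prod_type, Matrix.one_apply, RCLike.star_def, Finset.sum_mul,
    apply_ite (starRingEnd ℂ), star_one, star_zero, map_zero, ite_mul, mul_ite,
    one_mul, mul_one, zero_mul, mul_zero, Finset.sum_ite_eq, Finset.sum_ite_eq',
    Finset.mem_univ, if_true, Finset.sum_const_zero]
  calc ∑ x : Fin m, ∑ κ : ι, ∑ x2 : Fin m, ∑ x4 : Fin m,
        K κ x x4 * ρ (x4, k) (x2, l) * (starRingEnd ℂ) (K κ x x2)
      = ∑ x2 : Fin m, ∑ x4 : Fin m, (∑ κ : ι, ∑ x : Fin m,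
          (starRingEnd ℂ) (K κ x x2) * K κ x x4) * ρ (x4, k) (x2, l) := by
        simp only [Finset.sum_mul]
        refine (swap4 fun x κ x2 x4 => K κ x x4 * ρ (x4, k) (x2, l)
          * (starRingEnd ℂ) (K κ x x2)).trans ?_
        refine Finset.sum_congr rfl fun x2 _ => Finset.sum_congr rfl fun x4 _ =>
          Finset.sum_comm.trans ?_
        exact Finset.sum_congr rfl fun κ _ => Finset.sum_congr rfl fun x _ => by ring
    _ = ∑ i : Fin m, ρ (i, k) (i, l) := by
        simp [hK', ite_mul]
end
end

section
/- Let u, v ∈ ℂ² be unit vectors with 0 < |⟨u, v⟩| < 1. Then the density matrix ρ = (3/5) (u u*) ⊗ (|0⟩⟨0|) + (2/5) (v v*) ⊗ (|1⟩⟨1|) on ℂ² ⊗ ℂ² is not classical-quantum. (The ability to produce just two non-orthogonal states of subsystem A suffices to create nonzero quantum discord.) -/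
open Matrix Kronecker BigOperators ComplexOrder

noncomputable section

/-
Restricting ρ = ∑ᵢ eᵢeᵢ* ⊗ σᵢ to the diagonal blocks of the second factor gives
(3/5) uu* = ∑ᵢ (σᵢ)₀₀ eᵢeᵢ* and (2/5) vv* = ∑ᵢ (σᵢ)₁₁ eᵢeᵢ*. Hence uu* and vv* are diagonal in the
basis e, so ⟨eₐ, u⟩⟨u, e_b⟩ = 0 for a ≠ b: u, and likewise v, is a multiple of a single basis
vector. Two unit vectors of this form have ⟨u, v⟩ = 0 or |⟨u, v⟩| = 1.
-/

theorem Matrix.kronecker_submatrix_prodMk {l m n p R : Type*} [CommMagma R]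
    (A : Matrix l m R) (B : Matrix n p R) (k : n) (k' : p) :
    (A ⊗ₖ B).submatrix (·, k) (·, k') = B k k' • A := by
  ext i j
  exact mul_comm _ _

theorem Matrix.sum_submatrix {ι l m n p R : Type*} [AddCommMonoid R] (s : Finset ι)
    (A : ι → Matrix m n R) (r : l → m) (c : p → n) :
    (∑ i ∈ s, A i).submatrix r c = ∑ i ∈ s, (A i).submatrix r c := by
  ext i j
  simp [Matrix.sum_apply]

theorem proj_mulVec {m : ℕ} (w x : Fin m → ℂ) : proj w *ᵥ x = (star w ⬝ᵥ x) • w := by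
  simp [proj, vecMulVec_mulVec]

namespace IsONB

variable {m : ℕ} {e : Fin m → Fin m → ℂ}

theorem sum_mul_star (he : IsONB e) (k l : Fin m) :
    ∑ i, e i k * star (e i l) = if k = l then 1 else 0 := by
  -- orthonormality says Uᴴ U = 1 for the matrix U with columns eᵢ; completeness is U Uᴴ = 1
  set U : Matrix (Fin m) (Fin m) ℂ := (Matrix.of e)ᵀ
  have hU : Uᴴ * U = 1 := by
    ext i j
    simpa [U, Matrix.mul_apply, dotProduct, Matrix.one_apply] using he i j
  simpa [U, Matrix.mul_apply, Matrix.one_apply] using congrArg (· k l) (mul_eq_one_comm.mp hU)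

theorem sum_dotProduct_smul (he : IsONB e) (x : Fin m → ℂ) :
    ∑ i, (star (e i) ⬝ᵥ x) • e i = x := by
  ext k
  simp only [Finset.sum_apply, Pi.smul_apply, smul_eq_mul, dotProduct, Pi.star_apply,
    Finset.sum_mul]
  rw [Finset.sum_comm]
  simp_rw [mul_right_comm _ _ (e _ k), mul_comm _ (e _ k), ← Finset.sum_mul, he.sum_mul_star]
  simp

theorem eq_smul_of_dotProduct_eq_zero (he : IsONB e) {x : Fin m → ℂ} {a : Fin m}
    (h : ∀ i ≠ a, star (e i) ⬝ᵥ x = 0) : x = (star (e a) ⬝ᵥ x) • e a := by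
  conv_lhs => rw [← he.sum_dotProduct_smul x]
  exact Finset.sum_eq_single a (fun i _ hi => by rw [h i hi, zero_smul]) (by simp)

theorem sum_smul_proj_mulVec (he : IsONB e) (s : Fin m → ℂ) (b : Fin m) :
    (∑ i, s i • proj (e i)) *ᵥ e b = s b • e b := by
  simp [Matrix.sum_mulVec, Matrix.smul_mulVec, proj_mulVec, he _ b]

theorem dotProduct_eq_zero_or_of_smul_proj_eq (he : IsONB e) {c : ℂ} (hc : c ≠ 0)
    {w s : Fin m → ℂ} (h : c • proj w = ∑ i, s i • proj (e i)) {a b : Fin m} (hab : a ≠ b) :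
    star (e a) ⬝ᵥ w = 0 ∨ star (e b) ⬝ᵥ w = 0 := by
  have := congrArg (fun M => star (e a) ⬝ᵥ (M *ᵥ e b)) h
  simp only [smul_mulVec, proj_mulVec, dotProduct_smul, smul_eq_mul, he.sum_smul_proj_mulVec,
    he a b, hab, if_false, mul_zero, mul_eq_zero, hc, false_or] at this
  rw [star_dotProduct, star_eq_zero] at this
  exact this.symm

theorem exists_eq_smul_of_smul_proj_eq [NeZero m] (he : IsONB e) {c : ℂ} (hc : c ≠ 0)
    {w s : Fin m → ℂ} (h : c • proj w = ∑ i, s i • proj (e i)) :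
    ∃ a, ∃ d : ℂ, w = d • e a := by
  by_cases hw : ∃ a, star (e a) ⬝ᵥ w ≠ 0
  · obtain ⟨a, ha⟩ := hw
    exact ⟨a, _, he.eq_smul_of_dotProduct_eq_zero fun i hi =>
      (he.dotProduct_eq_zero_or_of_smul_proj_eq hc h hi).resolve_right ha⟩
  · push Not at hw
    exact ⟨0, _, he.eq_smul_of_dotProduct_eq_zero fun i _ => hw i⟩

theorem dotProduct_smul_smul (he : IsONB e) (c d : ℂ) (a b : Fin m) :
    star (c • e a) ⬝ᵥ (d • e b) = if a = b then star c * d else 0 := by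
  simp [star_smul, dotProduct_smul, smul_dotProduct, he a b, mul_comm]

theorem dotProduct_eq_zero_or_norm_eq_one (he : IsONB e) {c d : ℂ} {a b : Fin m}
    (hc : star (c • e a) ⬝ᵥ (c • e a) = 1) (hd : star (d • e b) ⬝ᵥ (d • e b) = 1) :
    star (c • e a) ⬝ᵥ (d • e b) = 0 ∨ ‖star (c • e a) ⬝ᵥ (d • e b)‖ = 1 := by
  simp only [he.dotProduct_smul_smul, if_true] at hc hd ⊢
  split_ifs
  · right
    have norm_eq_one {z : ℂ} (hz : star z * z = 1) : ‖z‖ = 1 := by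
      rw [RCLike.star_def, Complex.conj_mul'] at hz
      exact (pow_eq_one_iff_of_nonneg (norm_nonneg z) two_ne_zero).mp (by exact_mod_cast hz)
    rw [norm_mul, norm_star, norm_eq_one hc, norm_eq_one hd, one_mul]
  · exact Or.inl rfl

end IsONB

theorem stmt8 (u v : Fin 2 → ℂ)
    (hu : star u ⬝ᵥ u = 1) (hv : star v ⬝ᵥ v = 1)
    (h0 : 0 < ‖star u ⬝ᵥ v‖) (h1 : ‖star u ⬝ᵥ v‖ < 1) :
    ¬ ClassicalQuantum
      ((3 / 5 : ℂ) • (proj u ⊗ₖ (!![1, 0; 0, 0] : Matrix (Fin 2) (Fin 2) ℂ)) +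
        (2 / 5 : ℂ) • (proj v ⊗ₖ (!![0, 0; 0, 1] : Matrix (Fin 2) (Fin 2) ℂ))) := by
  rintro ⟨e, he, σ, -, hρ⟩
  have block (k : Fin 2) := congrArg (Matrix.submatrix · (·, k) (·, k)) hρ
  simp only [Matrix.submatrix_add, Matrix.submatrix_smul, Pi.add_apply, Pi.smul_apply,
    Matrix.sum_submatrix, Matrix.kronecker_submatrix_prodMk] at block
  obtain ⟨a, c, rfl⟩ := he.exists_eq_smul_of_smul_proj_eq (c := 3 / 5) (s := fun i => σ i 0 0)
    (by norm_num) (by simpa using block 0)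
  obtain ⟨b, d, rfl⟩ := he.exists_eq_smul_of_smul_proj_eq (c := 2 / 5) (s := fun i => σ i 1 1)
    (by norm_num) (by simpa using block 1)
  rcases he.dotProduct_eq_zero_or_norm_eq_one hu hv with h | h
  · exact h0.ne' (by rw [h, norm_zero])
  · exact h1.ne h
end
end

section
/- Let ρ_EPR = ΦΦ* with Φ = (|00⟩ + |11⟩)/√2, and for 0 < η ≤ 1 let σ_η = (1 − η) · (I_4 / 4) + η · ρ_EPR be the corresponding pseudo-pure state. Then σ_η is a density matrix on ℂ² ⊗ ℂ² that is not classical-quantum. (The pseudo-entangled states produced by the NMR device cannot be expressed without superposition, i.e. they have nonzero quantum discord.) -/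
/-! In a classical-quantum state `∑ᵢ eᵢeᵢ* ⊗ σᵢ`, fixing the indices `k, l` of the second factor
gives the block `∑ᵢ σᵢ(k,l) • eᵢeᵢ*`; all these blocks are diagonal in the orthonormal basis `e`,
so they commute pairwise. For the pseudo-pure state the blocks with `(k,l) = (0,1)` and `(1,0)`
are `(η/2)|0⟩⟨1|` and `(η/2)|1⟩⟨0|`, which do not commute when `η ≠ 0`. -/

open Matrix Kronecker BigOperators ComplexOrder

noncomputable section

/-- The standard basis vector |ab⟩ of ℂ² ⊗ ℂ². -/
def ket2 (a b : Fin 2) : Fin 2 × Fin 2 → ℂ :=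
  fun p => if p = (a, b) then 1 else 0

/-- The EPR state vector Φ = (|00⟩ + |11⟩)/√2. -/
def Phi : Fin 2 × Fin 2 → ℂ :=
  ((Real.sqrt 2 : ℂ))⁻¹ • (ket2 0 0 + ket2 1 1)

theorem IsONB.commute_proj {m : ℕ} {e : Fin m → Fin m → ℂ} (he : IsONB e) (i j : Fin m) :
    Commute (proj (e i)) (proj (e j)) := by
  by_cases hij : i = j
  · rw [hij]
  · simp only [Commute, SemiconjBy, proj, vecMulVec_mul_vecMulVec, he i j, he j i, hij,
      Ne.symm hij, if_false, zero_smul, vecMulVec_zero]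

theorem ClassicalQuantum.submatrix_commute {m n : ℕ}
    {ρ : Matrix (Fin m × Fin n) (Fin m × Fin n) ℂ} (hρ : ClassicalQuantum ρ) (k l k' l' : Fin n) :
    Commute (ρ.submatrix (·, k) (·, l)) (ρ.submatrix (·, k') (·, l')) := by
  obtain ⟨e, he, σ, -, rfl⟩ := hρ
  have slice : ∀ k l, (∑ i, proj (e i) ⊗ₖ σ i).submatrix (·, k) (·, l) =
      ∑ i, σ i k l • proj (e i) := by
    intro k l
    ext a c
    simp [Matrix.sum_apply, kroneckerMap_apply, mul_comm]
  rw [slice, slice]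
  exact Commute.sum_left _ _ _ fun i _ => Commute.sum_right _ _ _ fun j _ =>
    ((he.commute_proj i j).smul_left _).smul_right _

theorem IsDensityMatrix.convex_comb {d : Type*} [Fintype d] [DecidableEq d]
    {ρ τ : Matrix d d ℂ} (hρ : IsDensityMatrix ρ) (hτ : IsDensityMatrix τ) {t : ℝ}
    (ht0 : 0 ≤ t) (ht1 : t ≤ 1) :
    IsDensityMatrix (((1 - t : ℝ) : ℂ) • ρ + ((t : ℝ) : ℂ) • τ) := by
  refine ⟨.add (hρ.1.smul ?_) (hτ.1.smul ?_), ?_⟩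
  · exact Complex.zero_le_real.2 (sub_nonneg.2 ht1)
  · exact Complex.zero_le_real.2 ht0
  · simp [trace_add, trace_smul, hρ.2, hτ.2]

theorem isDensityMatrix_maximallyMixed {d : Type*} [Fintype d] [DecidableEq d] [Nonempty d] :
    IsDensityMatrix (((Fintype.card d : ℂ))⁻¹ • (1 : Matrix d d ℂ)) := by
  refine ⟨PosSemidef.one.smul (inv_nonneg.2 (Nat.cast_nonneg _)), ?_⟩
  simp [trace_smul]

theorem vecMulVec_Phi_apply (a b c d : Fin 2) :
    vecMulVec Phi (star Phi) (a, b) (c, d) = if a = b ∧ c = d then 1 / 2 else 0 := by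
  have h2 : ((Real.sqrt 2 : ℂ))⁻¹ * ((Real.sqrt 2 : ℂ))⁻¹ = 1 / 2 := by
    rw [← mul_inv, ← Complex.ofReal_mul, Real.mul_self_sqrt zero_le_two]
    norm_num
  fin_cases a <;> fin_cases b <;> fin_cases c <;> fin_cases d <;>
    simp [vecMulVec_apply, Phi, ket2, Complex.conj_ofReal, h2]

theorem isDensityMatrix_vecMulVec_Phi : IsDensityMatrix (vecMulVec Phi (star Phi)) := by
  refine ⟨posSemidef_vecMulVec_self_star Phi, ?_⟩
  simp [trace, Fintype.sum_prod_type, vecMulVec_Phi_apply]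

theorem stmt10 (η : ℝ) (hη0 : 0 < η) (hη1 : η ≤ 1) :
    IsDensityMatrix
      (((1 - η : ℝ) : ℂ) • ((1 / 4 : ℂ) • (1 : Matrix (Fin 2 × Fin 2) (Fin 2 × Fin 2) ℂ)) +
        ((η : ℝ) : ℂ) • vecMulVec Phi (star Phi)) ∧
    ¬ ClassicalQuantum
      (((1 - η : ℝ) : ℂ) • ((1 / 4 : ℂ) • (1 : Matrix (Fin 2 × Fin 2) (Fin 2 × Fin 2) ℂ)) +
        ((η : ℝ) : ℂ) • vecMulVec Phi (star Phi)) := by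
  refine ⟨?_, fun hcq => ?_⟩
  · have hcard : (1 / 4 : ℂ) = ((Fintype.card (Fin 2 × Fin 2) : ℂ))⁻¹ := by norm_num
    rw [hcard]
    exact isDensityMatrix_maximallyMixed.convex_comb isDensityMatrix_vecMulVec_Phi hη0.le hη1
  · have hblocks := congrFun (congrFun (hcq.submatrix_commute 0 1 1 0).eq 0) 0
    exact hη0.ne' (by simpa [Matrix.mul_apply, vecMulVec_Phi_apply] using hblocks)
end
end
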